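/- For n ≥ 2 and 0 ≤ s < r ≤ m, the numbers c_{n,m,r,s} and d_{n,m,r,s} satisfy d_{n,m,r,s} = d_{n−1,m,r,s} + Σ_{i=s+1}^{r−1} d_{n−1,m−1,i,s} + Σ_{i=0}^{s} Σ_{j=i}^{r} c_{n−2,m−1,j,i}; moreover, for n ≥ 2 and 0 ≤ r ≤ m, c_{n,m,r,r} = d_{n,m,r,r} + Σ_{i=0}^{r−1} Σ_{j=i}^{r} c_{n−1,m−1,j,i}. -/

import Mathlib

/-- Number of ascents of a sequence of non-negative integers:
indices `j` with `x j < x (j+1)`. -/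
def ascents (l : List ℕ) : ℕ :=
  ((l.zip l.tail).filter (fun p => p.1 < p.2)).length

/-- `x` is an ascent sequence: it starts with 0 and each subsequent letter is at most
one more than the number of ascents of the preceding prefix. -/
def IsAscentSeq (x : List ℕ) : Prop :=
  (∀ h : 0 < x.length, x.get ⟨0, h⟩ = 0) ∧
  ∀ i : Fin x.length, 0 < (i : ℕ) → x.get i ≤ ascents (x.take (i : ℕ)) + 1

/-- `p` contains the pattern `t`: `p` has a subsequence order-isomorphic to `t`. -/
def Contains (p t : List ℕ) : Prop :=
  ∃ f : Fin t.length → Fin p.length, StrictMono f ∧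
    ∀ i j : Fin t.length, t.get i < t.get j ↔ p.get (f i) < p.get (f j)

/-- `p` avoids the pattern `t`. -/
def Avoids (p t : List ℕ) : Prop := ¬ Contains p t

/-- `cA n m r s` is the number of 210-avoiding ascent sequences of length `n` with
exactly `m` ascents, largest letter `r`, and last letter `s`. -/
noncomputable def cA (n m r s : ℕ) : ℕ :=
  {x : List ℕ | x.length = n ∧ IsAscentSeq x ∧ Avoids x [2, 1, 0] ∧
    ascents x = m ∧ x.foldr max 0 = r ∧ x.getLast? = some s}.ncard

/-- `dA n m r s` is the number of 210-avoiding ascent sequences of length `n` with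
exactly `m` ascents, largest letter `r`, last letter `s`, and next-to-last
letter equal to `r`. -/
noncomputable def dA (n m r s : ℕ) : ℕ :=
  {x : List ℕ | x.length = n ∧ IsAscentSeq x ∧ Avoids x [2, 1, 0] ∧
    ascents x = m ∧ x.foldr max 0 = r ∧ x.getLast? = some s ∧
    x.dropLast.getLast? = some r}.ncard

/-!
Write a member of `D_{n,m,r,s}` (with `s < r`) as `u r s`. Appending a letter `c` to a nonempty
210-avoiding ascent sequence `u` yields one again iff `c ≤ asc u + 1` and `c` is at least the
smaller letter of every inversion of `u`; this pins down the prefixes `u` that occur. Sort them by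
the last letter `t` of `u`. For `s < t ≤ r`, deleting the letter `r` is a bijection onto
`D_{n-1,m-[t<r],t,s}`, since the inversion condition forces `t` to be the largest letter of `u`.
For `t ≤ s` the inversion condition already follows from `u` avoiding 210, so `u` ranges over all
of `C_{n-2,m-1,j,t}` with `t ≤ j ≤ r`. Likewise a member `u r` of `C_{n,m,r,r} \ D_{n,m,r,r}`
has `t < r`, and `u` ranges over `C_{n-1,m-1,j,t}` with `t ≤ j ≤ r`.
-/

open List

lemma ascents_cons_cons (a b : ℕ) (l : List ℕ) :
    ascents (a :: b :: l) = (if a < b then 1 else 0) + ascents (b :: l) := by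
  by_cases h : a < b <;> simp [ascents, h, add_comm]

lemma ascents_concat {l : List ℕ} {b : ℕ} (h : l.getLast? = some b) (a : ℕ) :
    ascents (l ++ [a]) = ascents l + if b < a then 1 else 0 := by
  induction l with
  | nil => simp at h
  | cons c l ih =>
    cases l with
    | nil =>
      obtain rfl : c = b := by simpa using h
      rw [List.cons_append, List.nil_append, ascents_cons_cons]
      exact add_comm _ _
    | cons d l =>
      have := ih (by rwa [List.getLast?_cons_cons] at h)
      simp only [List.cons_append] at this ⊢
      rw [ascents_cons_cons, this, ascents_cons_cons]
      omega

lemma ascents_le_length (l : List ℕ) : ascents l ≤ l.length :=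
  (List.length_filter_le _ _).trans (by simp)

lemma isAscentSeq_iff {x : List ℕ} : IsAscentSeq x ↔ (∀ h : 0 < x.length, x[0] = 0) ∧
    ∀ i (h : i < x.length), 0 < i → x[i] ≤ ascents (x.take i) + 1 := by
  simp [IsAscentSeq, Fin.forall_iff]

lemma isAscentSeq_concat_iff {u : List ℕ} (hu : u ≠ []) (a : ℕ) :
    IsAscentSeq (u ++ [a]) ↔ IsAscentSeq u ∧ a ≤ ascents u + 1 := by
  have hu0 : 0 < u.length := List.length_pos_iff.mpr hu
  have hlt (i : ℕ) (hi : i < u.length) : (u ++ [a])[i]'(by simp; omega) = u[i] ∧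
      (u ++ [a]).take i = u.take i :=
    ⟨List.getElem_append_left hi, List.take_append_of_le_length hi.le⟩
  simp only [isAscentSeq_iff, List.length_append, List.length_singleton, (hlt 0 hu0).1, hu0,
    forall_true_left]
  constructor
  · rintro ⟨h0, hi⟩
    refine ⟨⟨h0 (by omega), fun i hi' hi0 => ?_⟩, ?_⟩
    · simpa [hlt i hi'] using hi i (by omega) hi0
    · simpa using hi u.length (by omega) hu0
  · rintro ⟨⟨h0, hi⟩, ha⟩
    refine ⟨fun _ => h0, fun i hi' hi0 => ?_⟩
    rcases Nat.lt_or_ge i u.length with h | h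
    · simpa [hlt i h] using hi i h hi0
    · obtain rfl : i = u.length := by omega
      simpa using ha

lemma IsAscentSeq.getLast_le {u : List ℕ} (h : IsAscentSeq u) {b : ℕ}
    (hb : u.getLast? = some b) : b ≤ ascents u + 1 := by
  obtain ⟨v, rfl⟩ := List.getLast?_eq_some_iff.mp hb
  rcases eq_or_ne v [] with rfl | hv
  · have : b = 0 := by simpa using h.1 (by simp)
    omega
  · obtain ⟨t, ht⟩ : ∃ t, v.getLast? = some t := ⟨_, List.getLast?_eq_some_getLast hv⟩
    have := ((isAscentSeq_concat_iff hv b).mp h).2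
    rw [ascents_concat ht]
    omega

lemma IsAscentSeq.le_length {u : List ℕ} (h : IsAscentSeq u) {a : ℕ} (ha : a ∈ u) :
    a ≤ u.length := by
  obtain ⟨i, hi, rfl⟩ := List.mem_iff_getElem.mp ha
  rcases Nat.eq_zero_or_pos i with rfl | hi0
  · simp [(isAscentSeq_iff.mp h).1 hi]
  · have := (isAscentSeq_iff.mp h).2 i hi hi0
    have := ascents_le_length (u.take i)
    simp only [List.length_take] at this
    omega

lemma foldr_max_concat (u : List ℕ) (a : ℕ) :
    (u ++ [a]).foldr max 0 = max (u.foldr max 0) a := by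
  induction u with
  | nil => simp
  | cons c u ih => simp [ih, max_assoc]

lemma le_foldr_max {u : List ℕ} {a : ℕ} (ha : a ∈ u) : a ≤ u.foldr max 0 :=
  List.le_max_of_le ha le_rfl

def InversionMinLE (c : ℕ) (l : List ℕ) : Prop :=
  ∀ a b : ℕ, [a, b] <+ l → b < a → b ≤ c

lemma InversionMinLE.mono {c d : ℕ} {l : List ℕ} (h : InversionMinLE c l) (hcd : c ≤ d) :
    InversionMinLE d l :=
  fun a b hab hba => (h a b hab hba).trans hcd

lemma contains_210_iff (p : List ℕ) :
    Contains p [2, 1, 0] ↔ ∃ a b c, [a, b, c] <+ p ∧ b < a ∧ c < b := by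
  constructor
  · rintro ⟨f, hmono, hiff⟩
    refine ⟨p.get (f 0), p.get (f 1), p.get (f 2), ?_, (hiff 1 0).mp (by decide),
      (hiff 2 1).mp (by decide)⟩
    rw [List.sublist_iff_exists_fin_orderEmbedding_get_eq]
    exact ⟨OrderEmbedding.ofStrictMono f hmono, fun i => by fin_cases i <;> rfl⟩
  · rintro ⟨a, b, c, hsub, hba, hcb⟩
    obtain ⟨f, hf⟩ := List.sublist_iff_exists_fin_orderEmbedding_get_eq.mp hsub
    refine ⟨f, f.strictMono, fun i j => ?_⟩
    have h0 : p[(f 0 : ℕ)] = a := by simpa using (hf 0).symm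
    have h1 : p[(f 1 : ℕ)] = b := by simpa using (hf 1).symm
    have h2 : p[(f 2 : ℕ)] = c := by simpa using (hf 2).symm
    fin_cases i <;> fin_cases j <;> simp [h0, h1, h2] <;> omega

lemma avoids_210_iff (p : List ℕ) :
    Avoids p [2, 1, 0] ↔ ∀ a b c, [a, b, c] <+ p → b < a → b ≤ c := by
  simp only [Avoids, contains_210_iff, not_exists, not_and, not_lt]

lemma sublist_concat_iff {l' l : List ℕ} {a : ℕ} :
    l' <+ l ++ [a] ↔ l' <+ l ∨ ∃ l'', l' = l'' ++ [a] ∧ l'' <+ l := by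
  rw [List.sublist_append_iff]
  constructor
  · rintro ⟨l₁, l₂, rfl, h₁, h₂⟩
    rcases List.sublist_singleton.mp h₂ with rfl | rfl
    · left; simpa using h₁
    · right; exact ⟨l₁, rfl, h₁⟩
  · rintro (h | ⟨l'', rfl, h⟩)
    · exact ⟨l', [], by simp, h, List.nil_sublist _⟩
    · exact ⟨l'', [a], rfl, h, List.Sublist.refl _⟩

lemma avoids_210_concat_iff (u : List ℕ) (c : ℕ) :
    Avoids (u ++ [c]) [2, 1, 0] ↔ Avoids u [2, 1, 0] ∧ InversionMinLE c u := by
  simp only [avoids_210_iff, InversionMinLE]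
  constructor
  · intro h
    exact ⟨fun a b d hs => h a b d (hs.trans (List.sublist_append_left _ _)),
      fun a b hs => h a b c (by simpa using hs.append (List.Sublist.refl [c]))⟩
  · rintro ⟨h3, h2⟩ a b d hs hba
    rcases sublist_concat_iff.mp hs with hs' | ⟨l, hl, hl'⟩
    · exact h3 a b d hs' hba
    · have hl : [a, b] ++ [d] = l ++ [c] := hl
      obtain ⟨rfl, hdc⟩ := List.append_inj' hl rfl
      obtain rfl : d = c := by simpa using hdc
      exact h2 a b hl' hba

lemma inversionMinLE_concat_iff (s : ℕ) (u : List ℕ) (c : ℕ) :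
    InversionMinLE s (u ++ [c]) ↔ InversionMinLE s u ∧ ∀ a ∈ u, c < a → c ≤ s := by
  constructor
  · intro h
    exact ⟨fun a b hs => h a b (hs.trans (List.sublist_append_left _ _)),
      fun a ha => h a c
        (by simpa using (List.singleton_sublist.mpr ha).append (List.Sublist.refl [c]))⟩
  · rintro ⟨h2, hc⟩ a b hs hba
    rcases sublist_concat_iff.mp hs with hs' | ⟨l, hl, hl'⟩
    · exact h2 a b hs' hba
    · have hl : [a] ++ [b] = l ++ [c] := hl
      obtain ⟨rfl, hbc⟩ := List.append_inj' hl rfl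
      obtain rfl : b = c := by simpa using hbc
      exact hc a (List.singleton_sublist.mp hl') hba

lemma Avoids.inversionMinLE_getLast {u : List ℕ} (h : Avoids u [2, 1, 0]) {i : ℕ}
    (hi : u.getLast? = some i) : InversionMinLE i u := by
  obtain ⟨v, rfl⟩ := List.getLast?_eq_some_iff.mp hi
  exact (inversionMinLE_concat_iff i v i).mpr
    ⟨((avoids_210_concat_iff v i).mp h).2, fun _ _ _ => le_rfl⟩

lemma InversionMinLE.foldr_max_eq {s : ℕ} {u : List ℕ} (h : InversionMinLE s u) {i : ℕ}
    (hi : u.getLast? = some i) (hsi : s < i) : u.foldr max 0 = i := by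
  obtain ⟨v, rfl⟩ := List.getLast?_eq_some_iff.mp hi
  have hv : ∀ a ∈ v, a ≤ i := fun a ha => by
    by_contra! hia
    have := ((inversionMinLE_concat_iff s v i).mp h).2 a ha hia
    omega
  rw [foldr_max_concat]
  exact max_eq_right (List.max_le_of_forall_le v i hv)

lemma finite_setOf_length_eq_forall_le (n B : ℕ) :
    {l : List ℕ | l.length = n ∧ ∀ a ∈ l, a ≤ B}.Finite := by
  refine ((List.finite_length_eq (Fin (B + 1)) n).image (List.map Fin.val)).subset ?_
  rintro l ⟨hl, hB⟩
  refine ⟨l.pmap (fun a ha => ⟨a, Nat.lt_succ_of_le ha⟩) hB, by simpa using hl, ?_⟩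
  simp [List.map_pmap]

lemma Set.ncard_eq_sum_ncard_fiberwise {α β : Type*} {S : Set α} (hS : S.Finite) {f : α → β}
    {t : Finset β} (hf : ∀ x ∈ S, f x ∈ t) :
    S.ncard = ∑ b ∈ t, {x ∈ S | f x = b}.ncard := by
  classical
  rw [← hS.coe_toFinset, Set.ncard_coe_finset,
    Finset.card_eq_sum_card_fiberwise fun x hx => hf x (by simpa using hx)]
  refine Finset.sum_congr rfl fun b _ => ?_
  rw [← Set.ncard_coe_finset, Finset.coe_filter]
  rfl

lemma ncard_setOf_append_mem {α : Type*} {B : Set (List α)} (L : List α)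
    (hB : ∀ y ∈ B, ∃ u, y = u ++ L) : {u | u ++ L ∈ B}.ncard = B.ncard := by
  rw [← Set.ncard_image_of_injective _ (List.append_left_injective L)]
  congr 1
  ext y
  constructor
  · rintro ⟨u, hu, rfl⟩
    exact hu
  · intro hy
    obtain ⟨u, rfl⟩ := hB y hy
    exact ⟨u, hy, rfl⟩

lemma ncard_eq_sum_ncard_getLast {S : Set (List ℕ)} (hS : S.Finite) {t : Finset ℕ}
    (h : ∀ u ∈ S, ∃ i ∈ t, u.getLast? = some i) :
    S.ncard = ∑ i ∈ t, {u ∈ S | u.getLast? = some i}.ncard := by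
  rw [Set.ncard_eq_sum_ncard_fiberwise hS (t := t.map .some), Finset.sum_map]
  · rfl
  · intro u hu
    obtain ⟨i, hi, h'⟩ := h u hu
    simpa [h'] using hi

lemma sum_range_succ_eq_sum_Icc_add {M : Type*} [AddCommMonoid M] (f : ℕ → M) {s r : ℕ}
    (hsr : s < r) :
    ∑ i ∈ Finset.range (r + 1), f i
      = ∑ i ∈ Finset.Icc 0 s, f i + ∑ i ∈ Finset.Icc (s + 1) (r - 1), f i + f r := by
  obtain ⟨r, rfl⟩ := Nat.exists_eq_add_of_le' (Nat.one_le_of_lt hsr)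
  rw [Finset.sum_range_succ, Finset.range_eq_Ico, Nat.add_sub_cancel,
    ← Finset.sum_Ico_consecutive f (Nat.zero_le (s + 1)) hsr, Finset.Ico_add_one_right_eq_Icc,
    Finset.Ico_add_one_right_eq_Icc]

def cSet (n m r s : ℕ) : Set (List ℕ) :=
  {x : List ℕ | x.length = n ∧ IsAscentSeq x ∧ Avoids x [2, 1, 0] ∧
    ascents x = m ∧ x.foldr max 0 = r ∧ x.getLast? = some s}

def dSet (n m r s : ℕ) : Set (List ℕ) := {x ∈ cSet n m r s | x.dropLast.getLast? = some r}

section Sets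

variable {u x : List ℕ} {c i k m n r s t : ℕ}

lemma cA_eq_ncard (n m r s : ℕ) : cA n m r s = (cSet n m r s).ncard := rfl

lemma dA_eq_ncard (n m r s : ℕ) : dA n m r s = (dSet n m r s).ncard := by
  simp only [dA, dSet, cSet, Set.sep_ofPred, and_assoc]

lemma dSet_subset_cSet (n m r s : ℕ) : dSet n m r s ⊆ cSet n m r s :=
  Set.sep_subset _ _

lemma cSet_finite (n m r s : ℕ) : (cSet n m r s).Finite :=
  (finite_setOf_length_eq_forall_le n n).subset
    fun _ ⟨hl, ha, _⟩ => ⟨hl, fun _ h => hl ▸ ha.le_length h⟩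

lemma dSet_finite (n m r s : ℕ) : (dSet n m r s).Finite :=
  (cSet_finite n m r s).subset (dSet_subset_cSet n m r s)

lemma getLast?_eq_of_mem_cSet (h : x ∈ cSet n m r s) : x.getLast? = some s :=
  h.2.2.2.2.2

lemma exists_eq_append_of_mem_cSet (h : x ∈ cSet n m r s) : ∃ u, x = u ++ [s] :=
  List.getLast?_eq_some_iff.mp (getLast?_eq_of_mem_cSet h)

lemma exists_eq_append_of_mem_dSet (h : x ∈ dSet n m r s) : ∃ u, x = u ++ [r, s] := by
  obtain ⟨v, rfl⟩ := exists_eq_append_of_mem_cSet h.1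
  obtain ⟨u, rfl⟩ := List.getLast?_eq_some_iff.mp (List.dropLast_concat (l₁ := v) ▸ h.2)
  exact ⟨u, by simp⟩

lemma concat_mem_cSet_iff (ht : u.getLast? = some t) :
    u ++ [c] ∈ cSet (k + 1) m r c ↔ u.length = k ∧ IsAscentSeq u ∧ c ≤ ascents u + 1 ∧
      Avoids u [2, 1, 0] ∧ InversionMinLE c u ∧ ascents u + (if t < c then 1 else 0) = m ∧
      max (u.foldr max 0) c = r := by
  have hu : u ≠ [] := by rintro rfl; simp at ht
  simp only [cSet, Set.mem_ofPred_eq, List.length_append, List.length_singleton,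
    Nat.add_right_cancel_iff, isAscentSeq_concat_iff hu, avoids_210_concat_iff,
    ascents_concat ht, foldr_max_concat, List.getLast?_concat, and_true, and_assoc]

lemma concat_mem_dSet_iff (ht : u.getLast? = some t) :
    u ++ [c] ∈ dSet k m r c ↔ u ++ [c] ∈ cSet k m r c ∧ t = r := by
  rw [dSet, Set.mem_sep_iff, List.dropLast_concat, ht, Option.some_inj]

lemma append_pair_mem_dSet_iff (hsr : s < r) (ht : u.getLast? = some t) :
    u ++ [r, s] ∈ dSet (k + 2) m r s ↔
      u.length = k ∧ IsAscentSeq u ∧ r ≤ ascents u + 1 ∧ Avoids u [2, 1, 0] ∧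
      InversionMinLE s u ∧ ascents u + (if t < r then 1 else 0) = m ∧ u.foldr max 0 ≤ r := by
  have hu : u ≠ [] := by rintro rfl; simp at ht
  rw [show u ++ [r, s] = u ++ [r] ++ [s] by simp, concat_mem_dSet_iff List.getLast?_concat,
    concat_mem_cSet_iff List.getLast?_concat]
  simp only [List.length_append, List.length_singleton, Nat.add_right_cancel_iff,
    isAscentSeq_concat_iff hu, avoids_210_concat_iff, inversionMinLE_concat_iff,
    ascents_concat ht, foldr_max_concat, if_neg hsr.not_gt, add_zero, and_true]
  constructor
  · rintro ⟨hk, ⟨ha, hr⟩, -, ⟨hv, -⟩, ⟨hinv, -⟩, hm, hmax⟩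
    exact ⟨hk, ha, hr, hv, hinv, hm, by omega⟩
  · rintro ⟨hk, ha, hr, hv, hinv, hm, hmax⟩
    refine ⟨hk, ⟨ha, hr⟩, by split_ifs <;> omega, ⟨hv, hinv.mono hsr.le⟩,
      ⟨hinv, fun a ha hra => ?_⟩, hm, by omega⟩
    have := le_foldr_max ha
    omega

lemma append_pair_mem_dSet_iff_of_lt (hsi : s < i) (hir : i ≤ r) (hrm : r ≤ m)
    (hi : u.getLast? = some i) :
    u ++ [r, s] ∈ dSet (k + 2) m r s ↔
      u ++ [s] ∈ dSet (k + 1) (m - if i < r then 1 else 0) i s := by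
  rw [append_pair_mem_dSet_iff (hsi.trans_le hir) hi, concat_mem_dSet_iff hi,
    concat_mem_cSet_iff hi, if_neg hsi.not_gt, add_zero, and_iff_left rfl]
  constructor
  · rintro ⟨hk, ha, hr, hv, hinv, hm, -⟩
    have := hinv.foldr_max_eq hi hsi
    exact ⟨hk, ha, by omega, hv, hinv, by split_ifs at hm ⊢ <;> omega, by omega⟩
  · rintro ⟨hk, ha, -, hv, hinv, hm, -⟩
    have := hinv.foldr_max_eq hi hsi
    have := ha.getLast_le hi
    exact ⟨hk, ha, by split_ifs at hm <;> omega, hv, hinv, by split_ifs at hm ⊢ <;> omega,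
      by omega⟩

lemma append_pair_mem_dSet_iff_of_le (his : i ≤ s) (hsr : s < r) (hrm : r ≤ m)
    (hi : u.getLast? = some i) :
    u ++ [r, s] ∈ dSet (k + 2) m r s ↔ ∃ j ∈ Finset.Icc i r, u ∈ cSet k (m - 1) j i := by
  rw [append_pair_mem_dSet_iff hsr hi, if_pos (his.trans_lt hsr)]
  constructor
  · rintro ⟨hk, ha, -, hv, -, hm, hmax⟩
    exact ⟨_, Finset.mem_Icc.2 ⟨le_foldr_max (List.mem_of_getLast? hi), hmax⟩,
      hk, ha, hv, by omega, rfl, hi⟩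
  · rintro ⟨j, hj, hk, ha, hv, hm, rfl, -⟩
    exact ⟨hk, ha, by omega, hv, (hv.inversionMinLE_getLast hi).mono his, by omega,
      (Finset.mem_Icc.1 hj).2⟩

lemma concat_mem_cSet_sdiff_dSet_iff (hir : i < r) (hrm : r ≤ m) (hi : u.getLast? = some i) :
    u ++ [r] ∈ cSet (k + 2) m r r \ dSet (k + 2) m r r ↔
      ∃ j ∈ Finset.Icc i r, u ∈ cSet (k + 1) (m - 1) j i := by
  rw [Set.mem_sdiff, concat_mem_dSet_iff hi, and_iff_left_of_imp (fun _ h => hir.ne h.2),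
    concat_mem_cSet_iff hi, if_pos hir]
  constructor
  · rintro ⟨hk, ha, -, hv, -, hm, hmax⟩
    exact ⟨_, Finset.mem_Icc.2 ⟨le_foldr_max (List.mem_of_getLast? hi), by omega⟩,
      hk, ha, hv, by omega, rfl, hi⟩
  · rintro ⟨j, hj, hk, ha, hv, hm, rfl, -⟩
    have := (Finset.mem_Icc.1 hj).2
    exact ⟨hk, ha, by omega, hv, (hv.inversionMinLE_getLast hi).mono hir.le, by omega,
      by omega⟩

lemma ncard_sep_getLast_eq_dA {P : Set (List ℕ)}
    (hP : ∀ u, u.getLast? = some i → (u ∈ P ↔ u ++ [s] ∈ dSet k m i s)) :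
    {u ∈ P | u.getLast? = some i}.ncard = dA k m i s := by
  rw [dA_eq_ncard, ← ncard_setOf_append_mem (B := dSet k m i s) [s]
    fun _ hy => exists_eq_append_of_mem_cSet hy.1]
  congr 1
  ext u
  constructor
  · rintro ⟨hu, hi⟩
    exact (hP u hi).1 hu
  · intro hu
    have hi : u.getLast? = some i := by simpa using hu.2
    exact ⟨(hP u hi).2 hu, hi⟩

lemma ncard_sep_getLast_eq_sum_cA {P : Set (List ℕ)} (J : Finset ℕ)
    (hP : ∀ u, u.getLast? = some i → (u ∈ P ↔ ∃ j ∈ J, u ∈ cSet k m j i)) :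
    {u ∈ P | u.getLast? = some i}.ncard = ∑ j ∈ J, cA k m j i := by
  have hS (u : List ℕ) :
      u ∈ {u ∈ P | u.getLast? = some i} ↔ ∃ j ∈ J, u ∈ cSet k m j i :=
    ⟨fun ⟨hu, hi⟩ => (hP u hi).1 hu,
      fun ⟨j, hj, hu⟩ => ⟨(hP u (getLast?_eq_of_mem_cSet hu)).2 ⟨j, hj, hu⟩,
        getLast?_eq_of_mem_cSet hu⟩⟩
  have hfin : {u ∈ P | u.getLast? = some i}.Finite :=
    (J.finite_toSet.biUnion fun j _ => cSet_finite k m j i).subset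
      fun u hu => by simpa using (hS u).1 hu
  rw [Set.ncard_eq_sum_ncard_fiberwise hfin (f := fun u => u.foldr max 0) (t := J)]
  · refine Finset.sum_congr rfl fun j hj => congrArg Set.ncard (Set.ext fun u => ?_)
    constructor
    · rintro ⟨hu, rfl⟩
      obtain ⟨j', -, hu'⟩ := (hS u).1 hu
      obtain ⟨-, -, -, -, rfl, -⟩ := id hu'
      exact hu'
    · intro hu
      obtain ⟨-, -, -, -, hmax, -⟩ := id hu
      exact ⟨(hS u).2 ⟨j, hj, hu⟩, hmax⟩
  · intro u hu
    obtain ⟨j, hj, -, -, -, -, rfl, -⟩ := (hS u).1 hu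
    exact hj

end Sets

theorem dA_add_two {k m r s : ℕ} (hsr : s < r) (hrm : r ≤ m) :
    dA (k + 2) m r s
      = dA (k + 1) m r s + ∑ i ∈ Finset.Icc (s + 1) (r - 1), dA (k + 1) (m - 1) i s
        + ∑ i ∈ Finset.Icc 0 s, ∑ j ∈ Finset.Icc i r, cA k (m - 1) j i := by
  set P := {u : List ℕ | u ++ [r, s] ∈ dSet (k + 2) m r s}
  have hP : P.Finite := (dSet_finite _ _ _ _).preimage (List.append_left_injective _).injOn
  have hlast : ∀ u ∈ P, ∃ i ∈ Finset.range (r + 1), u.getLast? = some i := by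
    intro u hu
    obtain ⟨t, ht⟩ : ∃ t, u.getLast? = some t := by
      rcases eq_or_ne u [] with rfl | hu'
      · obtain ⟨-, hasc, -⟩ := hu.1
        have : r = 0 := by simpa using hasc.1 (by simp)
        omega
      · exact ⟨_, List.getLast?_eq_some_getLast hu'⟩
    obtain ⟨-, -, -, -, -, -, hmax⟩ := (append_pair_mem_dSet_iff hsr ht).1 hu
    have := le_foldr_max (List.mem_of_getLast? ht)
    exact ⟨t, Finset.mem_range.2 (by omega), ht⟩
  have hhigh (i : ℕ) (hsi : s < i) (hir : i ≤ r) :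
      {u ∈ P | u.getLast? = some i}.ncard = dA (k + 1) (m - if i < r then 1 else 0) i s :=
    ncard_sep_getLast_eq_dA fun _ hi => append_pair_mem_dSet_iff_of_lt hsi hir hrm hi
  have hlow (i : ℕ) (his : i ≤ s) :
      {u ∈ P | u.getLast? = some i}.ncard = ∑ j ∈ Finset.Icc i r, cA k (m - 1) j i :=
    ncard_sep_getLast_eq_sum_cA _ fun _ hi => append_pair_mem_dSet_iff_of_le his hsr hrm hi
  have hmid : ∑ i ∈ Finset.Icc (s + 1) (r - 1), {u ∈ P | u.getLast? = some i}.ncard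
      = ∑ i ∈ Finset.Icc (s + 1) (r - 1), dA (k + 1) (m - 1) i s := by
    refine Finset.sum_congr rfl fun i hi => ?_
    have := Finset.mem_Icc.1 hi
    rw [hhigh i (by omega) (by omega), if_pos (by omega)]
  rw [dA_eq_ncard, ← ncard_setOf_append_mem (B := dSet _ _ r s) [r, s]
      fun _ hy => exists_eq_append_of_mem_dSet hy,
    ncard_eq_sum_ncard_getLast hP hlast, sum_range_succ_eq_sum_Icc_add _ hsr, hmid,
    Finset.sum_congr rfl fun i hi => hlow i (Finset.mem_Icc.1 hi).2,
    hhigh r hsr le_rfl, if_neg (lt_irrefl r), Nat.sub_zero]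
  ac_rfl

theorem cA_add_two_self {k m r : ℕ} (hrm : r ≤ m) :
    cA (k + 2) m r r = dA (k + 2) m r r
      + ∑ i ∈ Finset.range r, ∑ j ∈ Finset.Icc i r, cA (k + 1) (m - 1) j i := by
  set Q := {u : List ℕ | u ++ [r] ∈ cSet (k + 2) m r r \ dSet (k + 2) m r r}
  have hQ : Q.Finite :=
    ((cSet_finite _ _ _ _).sdiff).preimage (List.append_left_injective _).injOn
  have hlast : ∀ u ∈ Q, ∃ i ∈ Finset.range r, u.getLast? = some i := by
    rintro u ⟨hC, hD⟩
    obtain ⟨t, ht⟩ : ∃ t, u.getLast? = some t := by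
      rcases eq_or_ne u [] with rfl | hu'
      · simpa using hC.1
      · exact ⟨_, List.getLast?_eq_some_getLast hu'⟩
    have htr : t ≠ r := fun h => hD ((concat_mem_dSet_iff ht).2 ⟨hC, h⟩)
    obtain ⟨-, -, -, -, -, -, hmax⟩ := (concat_mem_cSet_iff ht).1 hC
    have := le_foldr_max (List.mem_of_getLast? ht)
    exact ⟨t, Finset.mem_range.2 (by omega), ht⟩
  have hfib (i : ℕ) (hir : i < r) :
      {u ∈ Q | u.getLast? = some i}.ncard = ∑ j ∈ Finset.Icc i r, cA (k + 1) (m - 1) j i :=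
    ncard_sep_getLast_eq_sum_cA _ fun _ hi => concat_mem_cSet_sdiff_dSet_iff hir hrm hi
  rw [cA_eq_ncard, dA_eq_ncard, ← Set.ncard_sdiff_add_ncard_of_subset (dSet_subset_cSet _ _ _ _)
      (cSet_finite _ _ _ _), ← ncard_setOf_append_mem (B := cSet _ _ r r \ dSet _ _ r r) [r]
      fun _ hy => exists_eq_append_of_mem_cSet hy.1,
    ncard_eq_sum_ncard_getLast hQ hlast, add_comm]
  exact congrArg _ (Finset.sum_congr rfl fun i hi => hfib i (Finset.mem_range.1 hi))

/-- For `n ≥ 2`: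
`d_{n,m,r,s} = d_{n-1,m,r,s} + Σ_{i=s+1}^{r-1} d_{n-1,m-1,i,s} + Σ_{i=0}^{s} Σ_{j=i}^{r} c_{n-2,m-1,j,i}`
whenever `0 ≤ s < r ≤ m`, and
`c_{n,m,r,r} = d_{n,m,r,r} + Σ_{i=0}^{r-1} Σ_{j=i}^{r} c_{n-1,m-1,j,i}` whenever `0 ≤ r ≤ m`. -/
theorem dA_cA_recurrences (n : ℕ) (hn : 2 ≤ n) :
    (∀ m r s : ℕ, s < r → r ≤ m →
      dA n m r s
        = dA (n - 1) m r s + ∑ i ∈ Finset.Icc (s + 1) (r - 1), dA (n - 1) (m - 1) i s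
          + ∑ i ∈ Finset.Icc 0 s, ∑ j ∈ Finset.Icc i r, cA (n - 2) (m - 1) j i)
    ∧ (∀ m r : ℕ, r ≤ m →
      cA n m r r
        = dA n m r r + ∑ i ∈ Finset.range r, ∑ j ∈ Finset.Icc i r, cA (n - 1) (m - 1) j i) := by
  obtain ⟨k, rfl⟩ := Nat.exists_eq_add_of_le' hn
  exact ⟨fun _ _ _ hsr hrm => dA_add_two hsr hrm, fun _ _ hrm => cA_add_two_self hrm⟩
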